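/- Let T be the bounded operator on ℓ² defined by T(x₁,x₂,x₃,x₄,x₅,x₆,…) = (0, x₁, 0, x₃/3, 0, x₅/5, …), i.e. (Tx)_{2k} = x_{2k−1}/(2k−1) for k ≥ 1 and (Tx)_{2k−1} = 0. Then σ(T) = σ_a(T) = σ_uw(T) = σ_w(T) = E(T) = {0}, and consequently T does not satisfy property (UW_E). -/

import Mathlib

noncomputable section

open Set MeasureTheory

/-- The operator `T - λ·I`. -/
def opShift {E : Type*} [NormedAddCommGroup E] [InnerProductSpace ℂ E]
    (T : E →L[ℂ] E) (lam : ℂ) : E →L[ℂ] E :=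
  T - lam • ContinuousLinearMap.id ℂ E

/-- Upper semi-Fredholm: closed range and finite-dimensional kernel. -/
def IsUSF {E : Type*} [NormedAddCommGroup E] [InnerProductSpace ℂ E]
    (T : E →L[ℂ] E) : Prop :=
  IsClosed (LinearMap.range (T : E →ₗ[ℂ] E) : Set E) ∧ FiniteDimensional ℂ (LinearMap.ker (T : E →ₗ[ℂ] E))

/-- Lower semi-Fredholm: closed range and finite codimension. -/
def IsLSF {E : Type*} [NormedAddCommGroup E] [InnerProductSpace ℂ E]
    (T : E →L[ℂ] E) : Prop :=
  IsClosed (LinearMap.range (T : E →ₗ[ℂ] E) : Set E) ∧ FiniteDimensional ℂ (E ⧸ LinearMap.range (T : E →ₗ[ℂ] E))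

/-- Fredholm operator. -/
def IsFredholmOp {E : Type*} [NormedAddCommGroup E] [InnerProductSpace ℂ E]
    (T : E →L[ℂ] E) : Prop :=
  IsUSF T ∧ IsLSF T

/-- `ind T ≤ 0`, i.e. `dim ker T ≤ codim ran T`. -/
def indexNonpos {E : Type*} [NormedAddCommGroup E] [InnerProductSpace ℂ E]
    (T : E →L[ℂ] E) : Prop :=
  Module.rank ℂ (LinearMap.ker (T : E →ₗ[ℂ] E)) ≤ Module.rank ℂ (E ⧸ LinearMap.range (T : E →ₗ[ℂ] E))

/-- `ind T = 0`, i.e. `dim ker T = codim ran T`. -/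
def indexZero {E : Type*} [NormedAddCommGroup E] [InnerProductSpace ℂ E]
    (T : E →L[ℂ] E) : Prop :=
  Module.rank ℂ (LinearMap.ker (T : E →ₗ[ℂ] E)) = Module.rank ℂ (E ⧸ LinearMap.range (T : E →ₗ[ℂ] E))

/-- The approximate point spectrum: `λ` such that `T - λ` is not bounded below. -/
def specA {E : Type*} [NormedAddCommGroup E] [InnerProductSpace ℂ E]
    (T : E →L[ℂ] E) : Set ℂ :=
  {lam | ¬ ∃ c > 0, ∀ x : E, c * ‖x‖ ≤ ‖T x - lam • x‖}

/-- The upper semi-Weyl spectrum. -/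
def specUW {E : Type*} [NormedAddCommGroup E] [InnerProductSpace ℂ E]
    (T : E →L[ℂ] E) : Set ℂ :=
  {lam | ¬ (IsUSF (opShift T lam) ∧ indexNonpos (opShift T lam))}

/-- The Weyl spectrum. -/
def specW {E : Type*} [NormedAddCommGroup E] [InnerProductSpace ℂ E]
    (T : E →L[ℂ] E) : Set ℂ :=
  {lam | ¬ (IsFredholmOp (opShift T lam) ∧ indexZero (opShift T lam))}

/-- `lam` is an isolated point of the set `S`. -/
def IsIsolatedIn (S : Set ℂ) (lam : ℂ) : Prop :=
  lam ∈ S ∧ ∃ ε > 0, S ∩ Metric.ball lam ε = {lam}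

/-- `E(T)`: the isolated points of the spectrum that are eigenvalues. -/
def Eset {E : Type*} [NormedAddCommGroup E] [InnerProductSpace ℂ E]
    (T : E →L[ℂ] E) : Set ℂ :=
  {lam | IsIsolatedIn (spectrum ℂ T) lam ∧ ∃ x : E, x ≠ 0 ∧ T x = lam • x}

/-- `E₀(T)`: the isolated points of the spectrum that are eigenvalues of finite multiplicity. -/
def E0set {E : Type*} [NormedAddCommGroup E] [InnerProductSpace ℂ E]
    (T : E →L[ℂ] E) : Set ℂ :=
  {lam | IsIsolatedIn (spectrum ℂ T) lam ∧ (∃ x : E, x ≠ 0 ∧ T x = lam • x) ∧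
    FiniteDimensional ℂ (LinearMap.ker (opShift T lam : E →ₗ[ℂ] E))}

/-- Property `(UW_E)`: `σ_a(T) \ σ_uw(T) = E(T)`. -/
def PropUWE {E : Type*} [NormedAddCommGroup E] [InnerProductSpace ℂ E]
    (T : E →L[ℂ] E) : Prop :=
  specA T \ specUW T = Eset T

/-- Property `(V_E)`: `σ(T) \ σ_uw(T) = E(T)`. -/
def PropVE {E : Type*} [NormedAddCommGroup E] [InnerProductSpace ℂ E]
    (T : E →L[ℂ] E) : Prop :=
  spectrum ℂ T \ specUW T = Eset T

/-- Property `(W_E)`: `σ(T) \ σ_w(T) = E(T)`. -/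
def PropWE {E : Type*} [NormedAddCommGroup E] [InnerProductSpace ℂ E]
    (T : E →L[ℂ] E) : Prop :=
  spectrum ℂ T \ specW T = Eset T

/-- Weyl's theorem: `σ(T) \ σ_w(T) = E₀(T)`. -/
def WeylsTheorem {E : Type*} [NormedAddCommGroup E] [InnerProductSpace ℂ E]
    (T : E →L[ℂ] E) : Prop :=
  spectrum ℂ T \ specW T = E0set T

/-- `T` is hypercyclic: some orbit is dense. -/
def Hypercyclic {E : Type*} [NormedAddCommGroup E] [InnerProductSpace ℂ E]
    (T : E →L[ℂ] E) : Prop :=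
  ∃ x : E, Dense (Set.range fun n : ℕ => (T ^ n) x)

/-- `T` is supercyclic: the scaled orbit of some vector is dense. -/
def Supercyclic {E : Type*} [NormedAddCommGroup E] [InnerProductSpace ℂ E]
    (T : E →L[ℂ] E) : Prop :=
  ∃ x : E, Dense {y : E | ∃ (c : ℂ) (n : ℕ), y = c • (T ^ n) x}

/-- The ascent of `T`, as an extended natural number. -/
def ascent {E : Type*} [NormedAddCommGroup E] [InnerProductSpace ℂ E]
    (T : E →L[ℂ] E) : ℕ∞ :=
  sInf ((fun n : ℕ => (n : ℕ∞)) '' {n : ℕ | LinearMap.ker ((T ^ n : E →L[ℂ] E) : E →ₗ[ℂ] E) = LinearMap.ker ((T ^ (n + 1) : E →L[ℂ] E) : E →ₗ[ℂ] E)})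

/-- The descent of `T`, as an extended natural number. -/
def descent {E : Type*} [NormedAddCommGroup E] [InnerProductSpace ℂ E]
    (T : E →L[ℂ] E) : ℕ∞ :=
  sInf ((fun n : ℕ => (n : ℕ∞)) ''
    {n : ℕ | LinearMap.range ((T ^ n : E →L[ℂ] E) : E →ₗ[ℂ] E) = LinearMap.range ((T ^ (n + 1) : E →L[ℂ] E) : E →ₗ[ℂ] E)})

/-- Browder operator: Fredholm with equal finite ascent and descent. -/
def IsBrowder {E : Type*} [NormedAddCommGroup E] [InnerProductSpace ℂ E]
    (T : E →L[ℂ] E) : Prop :=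
  IsFredholmOp T ∧ ascent T = descent T ∧ ascent T < ⊤

/-- The Browder spectrum. -/
def specB {E : Type*} [NormedAddCommGroup E] [InnerProductSpace ℂ E]
    (T : E →L[ℂ] E) : Set ℂ :=
  {lam | ¬ IsBrowder (opShift T lam)}

/-- The essential spectrum. -/
def specE {E : Type*} [NormedAddCommGroup E] [InnerProductSpace ℂ E]
    (T : E →L[ℂ] E) : Set ℂ :=
  {lam | ¬ IsFredholmOp (opShift T lam)}

/-- The left essential spectrum. -/
def specLE {E : Type*} [NormedAddCommGroup E] [InnerProductSpace ℂ E]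
    (T : E →L[ℂ] E) : Set ℂ :=
  {lam | ¬ IsUSF (opShift T lam)}

/-- The right essential spectrum. -/
def specRE {E : Type*} [NormedAddCommGroup E] [InnerProductSpace ℂ E]
    (T : E →L[ℂ] E) : Set ℂ :=
  {lam | ¬ IsLSF (opShift T lam)}

/-- The Hilbert space `ℓ²`. -/
abbrev l2 := lp (fun _ : ℕ => ℂ) 2

/-!
Since `T² = 0`, `T - λ` is invertible for every `λ ≠ 0`, so `σ(T)` and with it `σ_a`, `σ_w`,
`σ_uw ⊆ σ_w` are contained in `{0}`. A basis vector in the range of `T` is killed by `T`: it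
witnesses `0 ∈ σ_a(T)` and `0 ∈ E(T)`, and there are infinitely many of them, so `ker T` is
infinite-dimensional, `T` is not upper semi-Fredholm and `0 ∈ σ_uw(T) ⊆ σ_w(T)`. Hence
`σ_a(T) \ σ_uw(T) = ∅` while `E(T) = {0}`.
-/

theorem spectrum_subset_singleton_zero_of_isNilpotent {𝕜 A : Type*} [Field 𝕜] [Ring A]
    [Algebra 𝕜 A] {a : A} (ha : IsNilpotent a) : spectrum 𝕜 a ⊆ {0} := by
  intro r hr
  by_contra hr0
  refine spectrum.notMem_iff.mpr ?_ hr
  rw [sub_eq_add_neg]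
  exact ha.neg.isUnit_add_left_of_commute ((IsUnit.mk0 r hr0).map (algebraMap 𝕜 A))
    (Algebra.commute_algebraMap_right r (-a))

theorem lp.orthonormal_single {𝕜 ι : Type*} [RCLike 𝕜] [DecidableEq ι] :
    Orthonormal 𝕜 (fun i ↦ lp.single 2 i (1 : 𝕜) : ι → lp (fun _ : ι ↦ 𝕜) 2) := by
  rw [orthonormal_iff_ite]
  intro i j
  rw [lp.inner_single_left, lp.single_apply, Pi.single_apply]
  split_ifs <;> simp

section SpectralSets

variable {E : Type*} [NormedAddCommGroup E] [InnerProductSpace ℂ E] (T : E →L[ℂ] E)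

theorem opShift_apply (lam : ℂ) (x : E) : opShift T lam x = T x - lam • x := rfl

@[simp]
theorem opShift_zero : opShift T 0 = T := by simp [opShift]

theorem isUnit_opShift_of_notMem_spectrum {lam : ℂ} (h : lam ∉ spectrum ℂ T) :
    IsUnit (opShift T lam) := by
  have hunit := (spectrum.notMem_iff.mp h).neg
  rwa [neg_sub, Algebra.algebraMap_eq_smul_one] at hunit

theorem isFredholmOp_and_indexZero_of_isUnit {A : E →L[ℂ] E} (hA : IsUnit A) :
    IsFredholmOp A ∧ indexZero A := by
  obtain ⟨u, rfl⟩ := hA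
  have hker : LinearMap.ker (u : E →ₗ[ℂ] E) = ⊥ :=
    LinearMap.ker_eq_bot.mpr (ContinuousLinearEquiv.ofUnit u).injective
  have hrange : LinearMap.range (u : E →ₗ[ℂ] E) = ⊤ :=
    LinearMap.range_eq_top.mpr (ContinuousLinearEquiv.ofUnit u).surjective
  have hclosed : IsClosed (LinearMap.range (u : E →ₗ[ℂ] E) : Set E) := by
    rw [hrange]; exact isClosed_univ
  have : Subsingleton (E ⧸ LinearMap.range (u : E →ₗ[ℂ] E)) :=
    Submodule.Quotient.subsingleton_iff.mpr hrange
  refine ⟨⟨⟨hclosed, ?_⟩, hclosed, inferInstance⟩, ?_⟩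
  · rw [hker]; infer_instance
  · rw [indexZero, hker, rank_bot, rank_subsingleton' ℂ]

theorem specUW_subset_specW : specUW T ⊆ specW T := by
  intro lam hlam ⟨hfred, hindex⟩
  exact hlam ⟨hfred.1, hindex.le⟩

theorem specW_subset_spectrum : specW T ⊆ spectrum ℂ T := fun _ hlam ↦ not_not.mp fun h ↦
  hlam (isFredholmOp_and_indexZero_of_isUnit (isUnit_opShift_of_notMem_spectrum T h))

theorem specA_subset_spectrum : specA T ⊆ spectrum ℂ T := by
  intro lam hlam
  by_contra h
  obtain ⟨u, hu⟩ := isUnit_opShift_of_notMem_spectrum T h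
  set S : E →L[ℂ] E := ↑u⁻¹
  have hS : ∀ x, S (T x - lam • x) = x := fun x ↦ by
    rw [← opShift_apply, ← hu]; exact congrArg (· x) u.inv_mul
  refine hlam ⟨(‖S‖ + 1)⁻¹, by positivity, fun x ↦ ?_⟩
  rw [inv_mul_le_iff₀ (by positivity)]
  calc ‖x‖ = ‖S (T x - lam • x)‖ := by rw [hS]
    _ ≤ ‖S‖ * ‖T x - lam • x‖ := S.le_opNorm _
    _ ≤ (‖S‖ + 1) * ‖T x - lam • x‖ := by gcongr; linarith

theorem mem_specA_of_apply_eq_smul {lam : ℂ} {x : E} (hx : x ≠ 0) (hTx : T x = lam • x) :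
    lam ∈ specA T := by
  rintro ⟨c, hc, hbound⟩
  have := hbound x
  rw [hTx, sub_self, norm_zero] at this
  exact hx (norm_le_zero_iff.mp (nonpos_of_mul_nonpos_right this hc))

theorem mem_specUW_of_not_finiteDimensional_ker {lam : ℂ}
    (h : ¬ FiniteDimensional ℂ (LinearMap.ker (opShift T lam : E →ₗ[ℂ] E))) :
    lam ∈ specUW T := fun hUW ↦ h hUW.1.2

theorem Eset_eq_singleton_of_spectrum_eq_singleton {lam : ℂ} (hσ : spectrum ℂ T = {lam})
    {x : E} (hx : x ≠ 0) (hTx : T x = lam • x) : Eset T = {lam} := by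
  ext μ
  simp only [Eset, IsIsolatedIn, hσ, Set.mem_ofPred_eq, Set.mem_singleton_iff]
  refine ⟨fun h ↦ h.1.1, ?_⟩
  rintro rfl
  exact ⟨⟨rfl, 1, one_pos, Set.singleton_inter_of_mem (Metric.mem_ball_self one_pos)⟩,
    x, hx, hTx⟩

end SpectralSets

theorem weightedShift_mul_self_eq_zero (T : l2 →L[ℂ] l2)
    (hT : ∀ (x : l2) (n : ℕ), (T x) n = if Odd n then x (n - 1) / n else 0) : T * T = 0 := by
  ext1 x
  refine lp.ext (funext fun n ↦ ?_)
  rw [mul_apply_eq_comp, hT, hT]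
  by_cases hn : Odd n
  · simp [hn, Nat.not_odd_iff_even.mpr (Nat.Odd.sub_odd hn odd_one)]
  · simp [hn]

theorem weightedShift_apply_single_of_odd (T : l2 →L[ℂ] l2)
    (hT : ∀ (x : l2) (n : ℕ), (T x) n = if Odd n then x (n - 1) / n else 0)
    {m : ℕ} (hm : Odd m) (c : ℂ) : T (lp.single 2 m c) = 0 := by
  refine lp.ext (funext fun n ↦ ?_)
  rw [hT]
  split_ifs with hn
  · rw [lp.single_apply_ne, zero_div, lp.coeFn_zero, Pi.zero_apply]
    obtain ⟨k, rfl⟩ := hn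
    obtain ⟨j, rfl⟩ := hm
    omega
  · rfl

theorem not_finiteDimensional_ker_weightedShift (T : l2 →L[ℂ] l2)
    (hT : ∀ (x : l2) (n : ℕ), (T x) n = if Odd n then x (n - 1) / n else 0) :
    ¬ FiniteDimensional ℂ (LinearMap.ker (T : l2 →ₗ[ℂ] l2)) := by
  intro hfin
  let v (k : ℕ) : LinearMap.ker (T : l2 →ₗ[ℂ] l2) :=
    ⟨lp.single 2 (2 * k + 1) 1,
      weightedShift_apply_single_of_odd T hT (odd_two_mul_add_one k) 1⟩
  have hv : LinearIndependent ℂ v :=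
    .of_comp (LinearMap.ker (T : l2 →ₗ[ℂ] l2)).subtype <|
      lp.orthonormal_single.linearIndependent.comp _ fun i j h ↦ by simpa using h
  exact Module.Finite.not_linearIndependent_of_infinite v hv

/-- the operator `T(x₁,x₂,x₃,x₄,x₅,…) = (0, x₁, 0, x₃/3, 0, x₅/5, …)`
(with 0-indexed coordinates: `(Tx)ₙ = x_{n-1}/n` for odd `n`, `0` for even `n`)
has `σ(T) = σ_a(T) = σ_uw(T) = σ_w(T) = E(T) = {0}`, and consequently `T`
does not satisfy property `(UW_E)`. -/
theorem stmt12_weighted_shift_example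
    (T : l2 →L[ℂ] l2)
    (hT : ∀ (x : l2) (n : ℕ), (T x) n = if Odd n then x (n - 1) / n else 0) :
    spectrum ℂ T = {0} ∧
    specA T = {0} ∧
    specUW T = {0} ∧
    specW T = {0} ∧
    Eset T = {0} ∧
    ¬ PropUWE T := by
  have hnil : IsNilpotent T := ⟨2, by rw [sq, weightedShift_mul_self_eq_zero T hT]⟩
  set e : l2 := lp.single 2 1 1
  have he : e ≠ 0 := lp.orthonormal_single.ne_zero 1
  have hTe : T e = (0 : ℂ) • e := by
    rw [zero_smul]; exact weightedShift_apply_single_of_odd T hT odd_one 1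
  have h0A : (0 : ℂ) ∈ specA T := mem_specA_of_apply_eq_smul T he hTe
  have hσ : spectrum ℂ T = {0} := (spectrum_subset_singleton_zero_of_isNilpotent hnil).antisymm
    (Set.singleton_subset_iff.mpr (specA_subset_spectrum T h0A))
  have h0UW : (0 : ℂ) ∈ specUW T := mem_specUW_of_not_finiteDimensional_ker T <| by
    rw [opShift_zero]; exact not_finiteDimensional_ker_weightedShift T hT
  have hA : specA T = {0} :=
    (hσ ▸ specA_subset_spectrum T).antisymm (Set.singleton_subset_iff.mpr h0A)
  have hW : specW T = {0} := (hσ ▸ specW_subset_spectrum T).antisymm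
    (Set.singleton_subset_iff.mpr (specUW_subset_specW T h0UW))
  have hUW : specUW T = {0} :=
    (hW ▸ specUW_subset_specW T).antisymm (Set.singleton_subset_iff.mpr h0UW)
  have hE : Eset T = {0} := Eset_eq_singleton_of_spectrum_eq_singleton T hσ he hTe
  refine ⟨hσ, hA, hUW, hW, hE, ?_⟩
  rw [PropUWE, hA, hUW, hE, Set.sdiff_self]
  exact (Set.singleton_ne_empty 0).symm
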